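/- Fix α > 0 and L ≥ 0. For any real-valued random variable X, C_*(α)·sup_{p≥1} ‖X‖_p/(√p + L·p^{1/α}) ≤ ‖X‖_{Ψ_{α,L}} ≤ C^*(α)·sup_{p≥1} ‖X‖_p/(√p + L·p^{1/α}), where ‖X‖_p := (E[|X|^p])^{1/p}, C_*(α) := (1/2)·min{1, α^{1/α}} and C^*(α) := e·max{2, 4^{1/α}}. -/

import Mathlib

open MeasureTheory ProbabilityTheory ENNReal

noncomputable section

/-- The `g`-Orlicz norm of a real-valued random variable:
`‖X‖_g := inf {η > 0 : E[g(|X|/η)] ≤ 1}`, with `inf ∅ = ∞`. -/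
def orliczNorm {Ω : Type*} [MeasurableSpace Ω] (μ : Measure Ω) (g : ℝ → ℝ) (X : Ω → ℝ) : ℝ≥0∞ :=
  sInf (ENNReal.ofReal '' {η : ℝ | 0 < η ∧ ∫⁻ ω, ENNReal.ofReal (g (|X ω| / η)) ∂μ ≤ 1})

/-- The inverse of the Generalized Bernstein-Orlicz function:
`Ψ_{α,L}⁻¹(t) = √(log(1+t)) + L (log(1+t))^{1/α}`. -/
def PsiInv (α L t : ℝ) : ℝ :=
  Real.sqrt (Real.log (1 + t)) + L * Real.log (1 + t) ^ (1 / α)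

/-- The Generalized Bernstein-Orlicz function `Ψ_{α,L}`: the non-decreasing function with
`Ψ_{α,L}(0) = 0` whose inverse is `PsiInv α L`. -/
def Psi (α L x : ℝ) : ℝ := sInf {t : ℝ | 0 ≤ t ∧ x ≤ PsiInv α L t}

/-- The Generalized Bernstein-Orlicz (GBO) norm `‖X‖_{Ψ_{α,L}}`. -/
def gboNorm {Ω : Type*} [MeasurableSpace Ω] (μ : Measure Ω) (α L : ℝ) (X : Ω → ℝ) : ℝ≥0∞ :=
  orliczNorm μ (Psi α L) X

/-- The `ψ_α`-Orlicz norm `‖X‖_{ψ_α} := inf {η > 0 : E[exp((|X|/η)^α)] ≤ 2}`,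
with `inf ∅ = ∞`. -/
def psiNorm {Ω : Type*} [MeasurableSpace Ω] (μ : Measure Ω) (α : ℝ) (X : Ω → ℝ) : ℝ≥0∞ :=
  sInf (ENNReal.ofReal ''
    {η : ℝ | 0 < η ∧ ∫⁻ ω, ENNReal.ofReal (Real.exp ((|X ω| / η) ^ α)) ∂μ ≤ 2})

end

/-!
Put `f = log (1 + Ψ(|X|/η))`. As `Ψ⁻¹ ∘ Ψ = id`, `|X|/η = f^{1/2} + L f^{1/α}`, and
`E[Ψ(|X|/η)] ≤ 1` says `E[e^f] ≤ 2`; with `x^q ≤ q^q e^x` this gives `‖f^{1/r}‖_p ≤ 2 (p/r)^{1/r}`,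
hence `‖X‖_p ≤ 2η (√(p/2) + L (p/α)^{1/α})`, which is the lower bound.

Conversely, if `‖X‖_p ≤ s (√p + L p^{1/α})` for all `p ≥ 1` and `η = e max{2, 4^{1/α}} s`, then
Markov's inequality at `p = 4 log(1+t)` gives `P(Ψ(|X|/η) > t) ≤ e^{-p} = (1+t)^{-4}` for `t > 1/3`,
and the layer-cake formula gives `E[Ψ(|X|/η)] ≤ 1/3 + ∫_{1/3}^∞ (1+t)^{-4} dt ≤ 1`.
-/

section Real

variable {α L : ℝ}

lemma rpow_le_rpow_mul_exp {x q : ℝ} (hx : 0 ≤ x) (hq : 0 < q) :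
    x ^ q ≤ q ^ q * Real.exp x := by
  have h : x ≤ q * Real.exp (x / q) := by
    simpa [← Real.exp_mul, div_eq_mul_inv, mul_comm] using
      Real.log_le_rpow_div (Real.exp_pos x).le (inv_pos.2 hq)
  calc x ^ q ≤ (q * Real.exp (x / q)) ^ q := Real.rpow_le_rpow hx h hq.le
    _ = q ^ q * Real.exp x := by
      rw [Real.mul_rpow hq.le (Real.exp_pos _).le, ← Real.exp_mul, div_mul_cancel₀ _ hq.ne']

noncomputable def momentRate (α L p : ℝ) : ℝ := Real.sqrt p + L * p ^ (1 / α)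

lemma psiInv_eq_momentRate (t : ℝ) : PsiInv α L t = momentRate α L (Real.log (1 + t)) := rfl

lemma momentRate_pos (hL : 0 ≤ L) {p : ℝ} (hp : 0 < p) : 0 < momentRate α L p :=
  add_pos_of_pos_of_nonneg (Real.sqrt_pos.2 hp) (mul_nonneg hL (Real.rpow_nonneg hp.le _))

lemma momentRate_mul_le (hL : 0 ≤ L) {c u : ℝ} (hc : 0 ≤ c) (hu : 0 ≤ u) :
    momentRate α L (c * u) ≤ max (Real.sqrt c) (c ^ (1 / α)) * momentRate α L u := by
  have h1 : Real.sqrt c * Real.sqrt u ≤ max (Real.sqrt c) (c ^ (1 / α)) * Real.sqrt u :=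
    mul_le_mul_of_nonneg_right (le_max_left _ _) (Real.sqrt_nonneg u)
  have h2 : c ^ (1 / α) * u ^ (1 / α) ≤ max (Real.sqrt c) (c ^ (1 / α)) * u ^ (1 / α) :=
    mul_le_mul_of_nonneg_right (le_max_right _ _) (Real.rpow_nonneg hu _)
  rw [momentRate, momentRate, Real.sqrt_mul hc, Real.mul_rpow hc hu]
  nlinarith [mul_le_mul_of_nonneg_left h2 hL]

lemma min_mul_le_momentRate (hα : 0 < α) (hL : 0 ≤ L) {p : ℝ} (hp : 0 ≤ p) :
    min 1 (α ^ (1 / α)) * (Real.sqrt (p / 2) + L * (p / α) ^ (1 / α)) ≤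
      momentRate α L p := by
  have hsqrt : min 1 (α ^ (1 / α)) * Real.sqrt (p / 2) ≤ Real.sqrt p :=
    calc min 1 (α ^ (1 / α)) * Real.sqrt (p / 2) ≤ 1 * Real.sqrt (p / 2) :=
          mul_le_mul_of_nonneg_right (min_le_left _ _) (Real.sqrt_nonneg _)
      _ ≤ Real.sqrt p := by rw [one_mul]; exact Real.sqrt_le_sqrt (by linarith)
  have hrpow : min 1 (α ^ (1 / α)) * (p / α) ^ (1 / α) ≤ p ^ (1 / α) :=
    calc min 1 (α ^ (1 / α)) * (p / α) ^ (1 / α) ≤ α ^ (1 / α) * (p / α) ^ (1 / α) :=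
          mul_le_mul_of_nonneg_right (min_le_right _ _) (Real.rpow_nonneg (by positivity) _)
      _ = p ^ (1 / α) := by
        rw [← Real.mul_rpow hα.le (by positivity), mul_div_cancel₀ _ hα.ne']
  rw [momentRate]
  nlinarith [mul_le_mul_of_nonneg_left hrpow hL]

end Real

section Psi

variable {α L : ℝ}

lemma psiInv_zero (hα : 0 < α) : PsiInv α L 0 = 0 := by
  simp [PsiInv, Real.zero_rpow (inv_pos.2 hα).ne']

lemma psiInv_lt_psiInv (hα : 0 < α) (hL : 0 ≤ L) {s t : ℝ} (hs : 0 ≤ s) (hst : s < t) :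
    PsiInv α L s < PsiInv α L t := by
  have hlog : Real.log (1 + s) < Real.log (1 + t) := Real.log_lt_log (by linarith) (by linarith)
  have hlog0 : 0 ≤ Real.log (1 + s) := Real.log_nonneg (by linarith)
  have hsqrt := Real.sqrt_lt_sqrt hlog0 hlog
  have hrpow := Real.rpow_le_rpow hlog0 hlog.le (one_div_nonneg.2 hα.le)
  unfold PsiInv
  nlinarith [mul_le_mul_of_nonneg_left hrpow hL]

lemma continuousOn_psiInv (hα : 0 < α) : ContinuousOn (PsiInv α L) (Set.Ici 0) := by
  have hlog : ContinuousOn (fun t : ℝ => Real.log (1 + t)) (Set.Ici 0) :=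
    (continuousOn_const.add continuousOn_id).log fun t ht =>
      (by linarith [Set.mem_Ici.1 ht] : (0 : ℝ) < 1 + t).ne'
  exact hlog.sqrt.add (continuousOn_const.mul (hlog.rpow_const fun _ _ => Or.inr (by positivity)))


lemma nonempty_setOf_le_psiInv (hL : 0 ≤ L) (x : ℝ) :
    {t : ℝ | 0 ≤ t ∧ x ≤ PsiInv α L t}.Nonempty := by
  refine ⟨Real.exp (x ^ 2) - 1, by linarith [Real.one_le_exp (sq_nonneg x)], ?_⟩
  rw [PsiInv, add_sub_cancel, Real.log_exp, Real.sqrt_sq_eq_abs]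
  nlinarith [le_abs_self x, mul_nonneg hL (Real.rpow_nonneg (sq_nonneg x) (1 / α))]

lemma psi_nonneg (hL : 0 ≤ L) (x : ℝ) : 0 ≤ Psi α L x :=
  le_csInf (nonempty_setOf_le_psiInv hL x) fun _ ht => ht.1

lemma psi_le_of_le_psiInv {x t : ℝ} (ht : 0 ≤ t) (hx : x ≤ PsiInv α L t) :
    Psi α L x ≤ t :=
  csInf_le ⟨0, fun _ hs => hs.1⟩ ⟨ht, hx⟩

lemma monotone_psi (hL : 0 ≤ L) : Monotone (Psi α L) := fun _ y hxy =>
  csInf_le_csInf ⟨0, fun _ hs => hs.1⟩ (nonempty_setOf_le_psiInv hL y)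
    fun _ ht => ⟨ht.1, hxy.trans ht.2⟩

lemma psiInv_psi (hα : 0 < α) (hL : 0 ≤ L) {x : ℝ} (hx : 0 ≤ x) :
    PsiInv α L (Psi α L x) = x := by
  obtain ⟨T, hT, hxT⟩ := nonempty_setOf_le_psiInv (α := α) hL x
  obtain ⟨t, ht, hPsiInv⟩ := intermediate_value_Icc hT
    ((continuousOn_psiInv hα).mono Set.Icc_subset_Ici_self)
    (show x ∈ Set.Icc (PsiInv α L 0) (PsiInv α L T) by
      rw [psiInv_zero hα]; exact ⟨hx, hxT⟩)
  suffices Psi α L x = t by rw [this, hPsiInv]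
  refine le_antisymm (psi_le_of_le_psiInv ht.1 hPsiInv.ge)
    (le_csInf (nonempty_setOf_le_psiInv hL x) fun s hs => ?_)
  by_contra! hst
  exact (hPsiInv ▸ psiInv_lt_psiInv hα hL hs.1 hst).not_ge hs.2

end Psi

section OrliczNorm

variable {Ω : Type*} [MeasurableSpace Ω] {μ : Measure Ω} {g : ℝ → ℝ} {X : Ω → ℝ}

lemma orliczNorm_le_ofReal {η : ℝ} (hη : 0 < η)
    (h : ∫⁻ ω, ENNReal.ofReal (g (|X ω| / η)) ∂μ ≤ 1) :
    orliczNorm μ g X ≤ ENNReal.ofReal η :=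
  sInf_le ⟨η, ⟨hη, h⟩, rfl⟩

lemma le_orliczNorm {b : ℝ≥0∞}
    (h : ∀ η : ℝ, 0 < η →
      ∫⁻ ω, ENNReal.ofReal (g (|X ω| / η)) ∂μ ≤ 1 → b ≤ ENNReal.ofReal η) :
    b ≤ orliczNorm μ g X :=
  le_sInf <| by
    rintro _ ⟨η, ⟨hη, hg⟩, rfl⟩
    exact h η hη hg

end OrliczNorm

noncomputable def momentGrowth {Ω : Type*} [MeasurableSpace Ω] (μ : Measure Ω) (α L : ℝ)
    (X : Ω → ℝ) : ℝ≥0∞ :=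
  ⨆ p ∈ Set.Ici (1 : ℝ), eLpNorm X (ENNReal.ofReal p) μ / ENNReal.ofReal (momentRate α L p)

section MomentGrowth

variable {Ω : Type*} [MeasurableSpace Ω] {μ : Measure Ω} {α L : ℝ} {X : Ω → ℝ}

lemma momentGrowth_le_ofReal {s : ℝ} (hs : 0 ≤ s)
    (h : ∀ p : ℝ, 1 ≤ p →
      eLpNorm X (ENNReal.ofReal p) μ ≤ ENNReal.ofReal (s * momentRate α L p)) :
    momentGrowth μ α L X ≤ ENNReal.ofReal s := by
  refine iSup₂_le fun p (hp : 1 ≤ p) => ENNReal.div_le_of_le_mul ?_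
  rw [← ENNReal.ofReal_mul hs]
  exact h p hp

lemma eLpNorm_le_of_momentGrowth_le (hL : 0 ≤ L) {s : ℝ} (hs : 0 ≤ s)
    (h : momentGrowth μ α L X ≤ ENNReal.ofReal s) {p : ℝ} (hp : 1 ≤ p) :
    eLpNorm X (ENNReal.ofReal p) μ ≤ ENNReal.ofReal (s * momentRate α L p) := by
  have hrate := momentRate_pos (α := α) hL (by linarith : (0 : ℝ) < p)
  have hle : eLpNorm X (ENNReal.ofReal p) μ / ENNReal.ofReal (momentRate α L p) ≤
      ENNReal.ofReal s :=
    (le_iSup₂ (f := fun p (_ : p ∈ Set.Ici (1 : ℝ)) =>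
      eLpNorm X (ENNReal.ofReal p) μ / ENNReal.ofReal (momentRate α L p)) p hp).trans h
  rw [ENNReal.div_le_iff (ENNReal.ofReal_pos.2 hrate).ne' ENNReal.ofReal_ne_top] at hle
  rwa [ENNReal.ofReal_mul hs]

end MomentGrowth

section ExponentialMoments

variable {Ω : Type*} [MeasurableSpace Ω] {μ : Measure Ω} {f : Ω → ℝ}

lemma lintegral_rpow_le_mul_lintegral_exp (hf : ∀ ω, 0 ≤ f ω) {q : ℝ} (hq : 0 < q) :
    ∫⁻ ω, ENNReal.ofReal (f ω ^ q) ∂μ ≤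
      ENNReal.ofReal (q ^ q) * ∫⁻ ω, ENNReal.ofReal (Real.exp (f ω)) ∂μ := by
  rw [← lintegral_const_mul' _ _ ENNReal.ofReal_ne_top]
  refine lintegral_mono fun ω => ?_
  rw [← ENNReal.ofReal_mul (by positivity)]
  exact ENNReal.ofReal_le_ofReal (rpow_le_rpow_mul_exp (hf ω) hq)

lemma eLpNorm_rpow_le_of_lintegral_exp_le_two (hf : ∀ ω, 0 ≤ f ω)
    (hexp : ∫⁻ ω, ENNReal.ofReal (Real.exp (f ω)) ∂μ ≤ 2) {p r : ℝ} (hp : 1 ≤ p)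
    (hr : 0 < r) :
    eLpNorm (fun ω => f ω ^ (1 / r)) (ENNReal.ofReal p) μ ≤
      ENNReal.ofReal (2 * (p / r) ^ (1 / r)) := by
  have hp0 : 0 < p := by linarith
  have hmoment :
      ∫⁻ ω, ‖f ω ^ (1 / r)‖ₑ ^ p ∂μ ≤ ENNReal.ofReal (2 * (p / r) ^ (p / r)) := by
    calc ∫⁻ ω, ‖f ω ^ (1 / r)‖ₑ ^ p ∂μ
        = ∫⁻ ω, ENNReal.ofReal (f ω ^ (p / r)) ∂μ := by
          refine lintegral_congr fun ω => ?_
          rw [Real.enorm_of_nonneg (Real.rpow_nonneg (hf ω) _), ENNReal.ofReal_rpow_of_nonneg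
            (Real.rpow_nonneg (hf ω) _) hp0.le, ← Real.rpow_mul (hf ω), one_div_mul_eq_div]
      _ ≤ ENNReal.ofReal ((p / r) ^ (p / r)) * 2 :=
          (lintegral_rpow_le_mul_lintegral_exp hf (by positivity)).trans (by gcongr)
      _ = ENNReal.ofReal (2 * (p / r) ^ (p / r)) := by
          rw [ENNReal.ofReal_mul zero_le_two, ENNReal.ofReal_ofNat, mul_comm]
  have hroot : (2 * (p / r) ^ (p / r)) ^ (1 / p) ≤ 2 * (p / r) ^ (1 / r) := by
    rw [Real.mul_rpow zero_le_two (by positivity), ← Real.rpow_mul (by positivity),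
      div_mul_div_comm, mul_one, mul_comm r, ← div_div, div_self hp0.ne']
    gcongr
    exact Real.rpow_le_self_of_one_le one_le_two ((div_le_one hp0).2 hp)
  rw [eLpNorm_eq_lintegral_rpow_enorm_toReal (by simpa using hp0) ENNReal.ofReal_ne_top,
    ENNReal.toReal_ofReal hp0.le]
  calc (∫⁻ ω, ‖f ω ^ (1 / r)‖ₑ ^ p ∂μ) ^ (1 / p)
      ≤ ENNReal.ofReal (2 * (p / r) ^ (p / r)) ^ (1 / p) := by gcongr
    _ ≤ ENNReal.ofReal (2 * (p / r) ^ (1 / r)) := by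
      rw [ENNReal.ofReal_rpow_of_nonneg (by positivity) (by positivity)]
      exact ENNReal.ofReal_le_ofReal hroot

end ExponentialMoments

section TailBounds

variable {Ω : Type*} [MeasurableSpace Ω] {μ : Measure Ω} {X : Ω → ℝ}

lemma meas_lt_abs_le_of_eLpNorm_le (hX : AEStronglyMeasurable X μ) {p a b : ℝ} (hp : 0 < p)
    (ha : 0 < a) (hb : 0 ≤ b) (h : eLpNorm X (ENNReal.ofReal p) μ ≤ ENNReal.ofReal b) :
    μ {ω | a < |X ω|} ≤ ENNReal.ofReal ((b / a) ^ p) := by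
  calc μ {ω | a < |X ω|} ≤ μ {ω | ENNReal.ofReal a ≤ ‖X ω‖ₑ} := by
        refine measure_mono fun ω hω => ?_
        show ENNReal.ofReal a ≤ ‖X ω‖ₑ
        rw [Real.enorm_eq_ofReal_abs]
        exact ENNReal.ofReal_le_ofReal (le_of_lt hω)
    _ ≤ (ENNReal.ofReal a)⁻¹ ^ p * eLpNorm X (ENNReal.ofReal p) μ ^ p := by
        have := meas_ge_le_mul_pow_eLpNorm_enorm μ (by simpa using hp) ENNReal.ofReal_ne_top hX
          (by simpa using ha) (fun h => absurd h ENNReal.ofReal_ne_top)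
        rwa [ENNReal.toReal_ofReal hp.le] at this
    _ ≤ (ENNReal.ofReal a)⁻¹ ^ p * ENNReal.ofReal b ^ p := by gcongr
    _ = ENNReal.ofReal ((b / a) ^ p) := by
        rw [← ENNReal.ofReal_inv_of_pos ha, ENNReal.ofReal_rpow_of_nonneg (by positivity) hp.le,
          ENNReal.ofReal_rpow_of_nonneg hb hp.le, ← ENNReal.ofReal_mul (by positivity),
          ← Real.mul_rpow (by positivity) hb, inv_mul_eq_div]

lemma lintegral_Ioi_one_add_rpow {a c : ℝ} (ha : a < -1) (hc : -1 < c) :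
    ∫⁻ t in Set.Ioi c, ENNReal.ofReal ((1 + t) ^ a) =
      ENNReal.ofReal (-(1 + c) ^ (a + 1) / (a + 1)) := by
  have hshift : ∫⁻ t in Set.Ioi c, ENNReal.ofReal ((1 + t) ^ a) =
      ∫⁻ x in Set.Ioi (1 + c), ENNReal.ofReal (x ^ a) := by
    conv_rhs => rw [← map_add_left_eq_self volume (1 : ℝ)]
    rw [setLIntegral_map measurableSet_Ioi (by fun_prop) (measurable_const_add 1)]
    congr 2
    ext t
    simp
  rw [hshift, ← ofReal_integral_eq_lintegral_ofReal
    (integrableOn_Ioi_rpow_of_lt ha (by linarith))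
    ((ae_restrict_iff' measurableSet_Ioi).2 (Filter.Eventually.of_forall fun x hx =>
      Real.rpow_nonneg (by linarith [Set.mem_Ioi.1 hx]) a)),
    integral_Ioi_rpow_of_lt ha (by linarith)]

lemma lintegral_le_one_of_meas_lt_le [IsProbabilityMeasure μ] {Y : Ω → ℝ}
    (hY : ∀ ω, 0 ≤ Y ω) (hYm : AEMeasurable Y μ)
    (htail : ∀ t : ℝ, 1 / 3 < t →
      μ {ω | t < Y ω} ≤ ENNReal.ofReal ((1 + t) ^ (-4 : ℝ))) :
    ∫⁻ ω, ENNReal.ofReal (Y ω) ∂μ ≤ 1 := by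
  have hhead : ∫⁻ t in Set.Ioc 0 (1 / 3), μ {ω | t < Y ω} ≤ ENNReal.ofReal (1 / 3) :=
    calc ∫⁻ t in Set.Ioc 0 (1 / 3), μ {ω | t < Y ω}
        ≤ ∫⁻ t in Set.Ioc (0 : ℝ) (1 / 3), 1 :=
          setLIntegral_mono measurable_const fun _ _ => prob_le_one
      _ = ENNReal.ofReal (1 / 3) := by simp
  have htail_int : ∫⁻ t in Set.Ioi (1 / 3), μ {ω | t < Y ω} ≤ ENNReal.ofReal (1 / 3) :=
    calc ∫⁻ t in Set.Ioi (1 / 3), μ {ω | t < Y ω}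
        ≤ ∫⁻ t in Set.Ioi (1 / 3), ENNReal.ofReal ((1 + t) ^ (-4 : ℝ)) :=
          setLIntegral_mono (by fun_prop) htail
      _ = ENNReal.ofReal (-(1 + 1 / 3) ^ (-4 + 1 : ℝ) / (-4 + 1)) :=
          lintegral_Ioi_one_add_rpow (by norm_num) (by norm_num)
      _ ≤ ENNReal.ofReal (1 / 3) := by
          refine ENNReal.ofReal_le_ofReal ?_
          have : (1 + 1 / 3 : ℝ) ^ (-4 + 1 : ℝ) ≤ 1 :=
            Real.rpow_le_one_of_one_le_of_nonpos (by norm_num) (by norm_num)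
          linarith
  rw [lintegral_eq_lintegral_meas_lt μ (Filter.Eventually.of_forall hY) hYm,
    ← Set.Ioc_union_Ioi_eq_Ioi (by norm_num : (0 : ℝ) ≤ 1 / 3),
    lintegral_union measurableSet_Ioi Set.Ioc_disjoint_Ioi_same]
  calc _ ≤ ENNReal.ofReal (1 / 3) + ENNReal.ofReal (1 / 3) := add_le_add hhead htail_int
    _ ≤ 1 := by
      rw [← ENNReal.ofReal_add (by norm_num) (by norm_num), ← ENNReal.ofReal_one]
      exact ENNReal.ofReal_le_ofReal (by norm_num)

end TailBounds

section GBOLowerBound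

variable {Ω : Type*} [MeasurableSpace Ω] {μ : Measure Ω} {α L : ℝ} {X : Ω → ℝ}

lemma measurable_psi_abs_div (hL : 0 ≤ L) (hX : Measurable X) (η : ℝ) :
    Measurable fun ω => Psi α L (|X ω| / η) :=
  (monotone_psi hL).measurable.comp (hX.abs.div_const η)

lemma lintegral_exp_log_one_add_psi_le_two [IsProbabilityMeasure μ] (hL : 0 ≤ L) {η : ℝ}
    (h : ∫⁻ ω, ENNReal.ofReal (Psi α L (|X ω| / η)) ∂μ ≤ 1) :
    ∫⁻ ω, ENNReal.ofReal (Real.exp (Real.log (1 + Psi α L (|X ω| / η)))) ∂μ ≤ 2 := by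
  have hpos (ω : Ω) : 0 < 1 + Psi α L (|X ω| / η) := by
    linarith [psi_nonneg hL (α := α) (|X ω| / η)]
  simp_rw [Real.exp_log (hpos _), ENNReal.ofReal_add zero_le_one (psi_nonneg hL _),
    ENNReal.ofReal_one]
  rw [lintegral_add_left measurable_const, lintegral_const, measure_univ, mul_one,
    ← one_add_one_eq_two]
  gcongr

lemma eLpNorm_le_of_lintegral_psi_le_one [IsProbabilityMeasure μ] (hα : 0 < α) (hL : 0 ≤ L)
    (hX : Measurable X) {η : ℝ} (hη : 0 < η)
    (h : ∫⁻ ω, ENNReal.ofReal (Psi α L (|X ω| / η)) ∂μ ≤ 1) {p : ℝ} (hp : 1 ≤ p) :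
    eLpNorm X (ENNReal.ofReal p) μ ≤
      ENNReal.ofReal (2 * η * (Real.sqrt (p / 2) + L * (p / α) ^ (1 / α))) := by
  set f : Ω → ℝ := fun ω => Real.log (1 + Psi α L (|X ω| / η))
  have hf (ω : Ω) : 0 ≤ f ω :=
    Real.log_nonneg (by linarith [psi_nonneg hL (α := α) (|X ω| / η)])
  have hfm : Measurable f :=
    Real.measurable_log.comp (measurable_const.add (measurable_psi_abs_div hL hX η))
  have hexp := lintegral_exp_log_one_add_psi_le_two hL h
  have habs (ω : Ω) :
      ‖X ω‖ =
        ‖(η • ((fun ω => f ω ^ (1 / 2 : ℝ)) + L • fun ω => f ω ^ (1 / α))) ω‖ := by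
    have hinv := psiInv_psi hα hL (div_nonneg (abs_nonneg (X ω)) hη.le)
    rw [PsiInv, Real.sqrt_eq_rpow] at hinv
    simp only [Pi.smul_apply, Pi.add_apply, smul_eq_mul, Real.norm_eq_abs, f, hinv, abs_mul,
      abs_of_pos hη]
    rw [abs_of_nonneg (div_nonneg (abs_nonneg _) hη.le), mul_div_cancel₀ _ hη.ne']
  have hsqrt := eLpNorm_rpow_le_of_lintegral_exp_le_two (μ := μ) hf hexp hp two_pos
  have hrpow := eLpNorm_rpow_le_of_lintegral_exp_le_two (μ := μ) hf hexp hp hα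
  rw [← Real.sqrt_eq_rpow] at hsqrt
  calc eLpNorm X (ENNReal.ofReal p) μ
      = ‖η‖ₑ * eLpNorm ((fun ω => f ω ^ (1 / 2 : ℝ)) + L • fun ω => f ω ^ (1 / α))
          (ENNReal.ofReal p) μ := by
        rw [eLpNorm_congr_norm_ae (Filter.Eventually.of_forall habs), eLpNorm_const_smul]
    _ ≤ ‖η‖ₑ * (eLpNorm (fun ω => f ω ^ (1 / 2 : ℝ)) (ENNReal.ofReal p) μ +
          ‖L‖ₑ * eLpNorm (fun ω => f ω ^ (1 / α)) (ENNReal.ofReal p) μ) := by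
        refine mul_le_mul_right ((eLpNorm_add_le (hfm.pow_const _).aestronglyMeasurable
          ((hfm.pow_const _).aestronglyMeasurable.const_smul L) (by simpa using hp)).trans_eq ?_) _
        rw [eLpNorm_const_smul]
    _ ≤ ENNReal.ofReal η * (ENNReal.ofReal (2 * Real.sqrt (p / 2)) +
          ENNReal.ofReal L * ENNReal.ofReal (2 * (p / α) ^ (1 / α))) := by
        rw [Real.enorm_of_nonneg hη.le, Real.enorm_of_nonneg hL]
        gcongr
    _ = ENNReal.ofReal (2 * η * (Real.sqrt (p / 2) + L * (p / α) ^ (1 / α))) := by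
        rw [← ENNReal.ofReal_mul hL, ← ENNReal.ofReal_add (by positivity) (by positivity),
          ← ENNReal.ofReal_mul hη.le]
        ring_nf

lemma ofReal_mul_momentGrowth_le_gboNorm [IsProbabilityMeasure μ] (hα : 0 < α) (hL : 0 ≤ L)
    (hX : Measurable X) :
    ENNReal.ofReal ((1 / 2) * min 1 (α ^ (1 / α))) * momentGrowth μ α L X ≤
      gboNorm μ α L X := by
  refine le_orliczNorm fun η hη h => ?_
  set m := min 1 (α ^ (1 / α))
  have hm : 0 < m := lt_min one_pos (Real.rpow_pos_of_pos hα _)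
  have hgrowth : momentGrowth μ α L X ≤ ENNReal.ofReal (2 * η / m) := by
    refine momentGrowth_le_ofReal (by positivity) fun p hp => ?_
    refine (eLpNorm_le_of_lintegral_psi_le_one hα hL hX hη h hp).trans
      (ENNReal.ofReal_le_ofReal ?_)
    have hrate := min_mul_le_momentRate hα hL (by linarith : (0 : ℝ) ≤ p)
    calc 2 * η * (Real.sqrt (p / 2) + L * (p / α) ^ (1 / α))
        = 2 * η / m * (m * (Real.sqrt (p / 2) + L * (p / α) ^ (1 / α))) := by field_simp
      _ ≤ 2 * η / m * momentRate α L p := by gcongr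
  calc ENNReal.ofReal ((1 / 2) * m) * momentGrowth μ α L X
      ≤ ENNReal.ofReal ((1 / 2) * m) * ENNReal.ofReal (2 * η / m) := by gcongr
    _ = ENNReal.ofReal η := by
      rw [← ENNReal.ofReal_mul (by positivity)]
      congr 1
      field_simp

end GBOLowerBound

section GBOUpperBound

variable {Ω : Type*} [MeasurableSpace Ω] {μ : Measure Ω} {α L : ℝ} {X : Ω → ℝ}

lemma meas_lt_psi_le (hL : 0 ≤ L) (hX : Measurable X) {s : ℝ} (hs : 0 < s)
    (hmom : ∀ p : ℝ, 1 ≤ p →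
      eLpNorm X (ENNReal.ofReal p) μ ≤ ENNReal.ofReal (s * momentRate α L p))
    {t : ℝ} (ht : 1 / 3 < t) :
    μ {ω | t < Psi α L (|X ω| / (Real.exp 1 * max 2 ((4 : ℝ) ^ (1 / α)) * s))} ≤
      ENNReal.ofReal ((1 + t) ^ (-4 : ℝ)) := by
  set M := max 2 ((4 : ℝ) ^ (1 / α))
  set u := Real.log (1 + t) with hu_def
  have hu : 1 / 4 < u :=
    calc 1 / 4 < 1 - (1 + t)⁻¹ := by
          rw [lt_sub_comm, inv_lt_comm₀ (by linarith) (by norm_num)]; linarith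
      _ ≤ u := Real.one_sub_inv_le_log_of_pos (by linarith)
  have hp : 1 ≤ 4 * u := by linarith
  have hrate : momentRate α L (4 * u) ≤ M * PsiInv α L t := by
    have h4 : Real.sqrt 4 = 2 := by
      rw [show (4 : ℝ) = 2 ^ 2 by norm_num, Real.sqrt_sq zero_le_two]
    simpa only [psiInv_eq_momentRate, h4] using
      momentRate_mul_le (α := α) hL zero_le_four (by linarith : 0 ≤ u)
  have hsub : {ω | t < Psi α L (|X ω| / (Real.exp 1 * M * s))} ⊆
      {ω | Real.exp 1 * (s * momentRate α L (4 * u)) < |X ω|} := by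
    intro ω (hω : t < _)
    by_contra hlt
    have hle : |X ω| ≤ Real.exp 1 * (s * momentRate α L (4 * u)) := not_lt.1 hlt
    refine (psi_le_of_le_psiInv (by linarith) ?_).not_gt hω
    rw [div_le_iff₀ (by positivity)]
    calc |X ω| ≤ Real.exp 1 * (s * momentRate α L (4 * u)) := hle
      _ ≤ Real.exp 1 * (s * (M * PsiInv α L t)) := by gcongr
      _ = PsiInv α L t * (Real.exp 1 * M * s) := by ring
  have hrate_pos := momentRate_pos (α := α) hL (by linarith : (0 : ℝ) < 4 * u)
  calc μ {ω | t < Psi α L (|X ω| / (Real.exp 1 * M * s))}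
      ≤ μ {ω | Real.exp 1 * (s * momentRate α L (4 * u)) < |X ω|} := measure_mono hsub
    _ ≤ ENNReal.ofReal ((s * momentRate α L (4 * u) /
          (Real.exp 1 * (s * momentRate α L (4 * u)))) ^ (4 * u)) :=
        meas_lt_abs_le_of_eLpNorm_le hX.aestronglyMeasurable (by linarith) (by positivity)
          (by positivity) (hmom _ hp)
    _ = ENNReal.ofReal ((1 + t) ^ (-4 : ℝ)) := by
        rw [div_mul_cancel_right₀ (by positivity), ← Real.exp_neg, ← Real.exp_mul,
          Real.rpow_def_of_pos (by linarith), ← hu_def]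
        ring_nf

lemma gboNorm_le_of_eLpNorm_le [IsProbabilityMeasure μ] (hL : 0 ≤ L)
    (hX : Measurable X) {s : ℝ} (hs : 0 < s)
    (hmom : ∀ p : ℝ, 1 ≤ p →
      eLpNorm X (ENNReal.ofReal p) μ ≤ ENNReal.ofReal (s * momentRate α L p)) :
    gboNorm μ α L X ≤ ENNReal.ofReal (Real.exp 1 * max 2 ((4 : ℝ) ^ (1 / α)) * s) :=
  orliczNorm_le_ofReal (by positivity) <|
    lintegral_le_one_of_meas_lt_le (fun _ => psi_nonneg hL _)
      (measurable_psi_abs_div hL hX _).aemeasurable fun _ ht => meas_lt_psi_le hL hX hs hmom ht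

lemma gboNorm_le_ofReal_mul_momentGrowth [IsProbabilityMeasure μ] (hL : 0 ≤ L)
    (hX : Measurable X) :
    gboNorm μ α L X ≤
      ENNReal.ofReal (Real.exp 1 * max 2 ((4 : ℝ) ^ (1 / α))) * momentGrowth μ α L X := by
  set C := Real.exp 1 * max 2 ((4 : ℝ) ^ (1 / α))
  have hC : 0 < C := by positivity
  refine ENNReal.le_of_forall_pos_le_add fun ε hε hlt => ?_
  have hG : momentGrowth μ α L X ≠ ⊤ := fun h => by
    simp [h, ENNReal.mul_top (ENNReal.ofReal_pos.2 hC).ne'] at hlt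
  set s := (momentGrowth μ α L X).toReal + ε / C
  have hs : 0 < s := by positivity
  have hGs : momentGrowth μ α L X ≤ ENNReal.ofReal s := by
    rw [← ENNReal.ofReal_toReal hG]
    exact ENNReal.ofReal_le_ofReal (le_add_of_nonneg_right (by positivity))
  calc gboNorm μ α L X
      ≤ ENNReal.ofReal (C * s) := gboNorm_le_of_eLpNorm_le hL hX hs fun p hp =>
        eLpNorm_le_of_momentGrowth_le hL hs.le hGs hp
    _ = ENNReal.ofReal C * momentGrowth μ α L X + ε := by
        rw [mul_add, mul_div_cancel₀ _ hC.ne', ENNReal.ofReal_add (by positivity) (by positivity),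
          ENNReal.ofReal_mul hC.le, ENNReal.ofReal_toReal hG, ENNReal.ofReal_coe_nnreal]

end GBOUpperBound

/-- Equivalence of the GBO norm and the moment growth
`sup_{p ≥ 1} ‖X‖_p/(√p + L p^{1/α})`, with constants
`C_*(α) = (1/2) min{1, α^{1/α}}` and `C^*(α) = e max{2, 4^{1/α}}`. -/
theorem gbo_moment_equiv {Ω : Type*} [MeasurableSpace Ω] (μ : Measure Ω) [IsProbabilityMeasure μ]
    (α L : ℝ) (hα : 0 < α) (hL : 0 ≤ L) (X : Ω → ℝ) (hX : Measurable X) :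
    ENNReal.ofReal ((1 / 2) * min 1 (α ^ (1 / α))) *
        (⨆ p ∈ Set.Ici (1 : ℝ),
          eLpNorm X (ENNReal.ofReal p) μ / ENNReal.ofReal (Real.sqrt p + L * p ^ (1 / α)))
      ≤ gboNorm μ α L X ∧
    gboNorm μ α L X ≤
      ENNReal.ofReal (Real.exp 1 * max 2 ((4 : ℝ) ^ (1 / α))) *
        (⨆ p ∈ Set.Ici (1 : ℝ),
          eLpNorm X (ENNReal.ofReal p) μ / ENNReal.ofReal (Real.sqrt p + L * p ^ (1 / α))) :=
  ⟨ofReal_mul_momentGrowth_le_gboNorm hα hL hX, gboNorm_le_ofReal_mul_momentGrowth hL hX⟩
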